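/- For the PPM-style cost model in which compressing a string s of length m with k-th order context coding outputs m·H_k(s) + O(log m) bits: for T = (2^k 0)^{n/(2(k+1))} (2^k 1)^{n/(2(k+1))} over alphabet {0,1,2} (where 2^k denotes k repetitions of symbol 2), compressing the two halves of T separately costs O(log n) bits, while compressing T as a whole costs at least n/(k+1) + O(log n) bits; hence splitting improves the cost by a factor Ω(n/((k+1)·log n)). -/

import Mathlib

/-- `u_T`: the string of single symbols following the occurrences of `u` in `T`. -/
def following {α : Type*} [DecidableEq α] (T u : List α) : List α :=
  (List.range T.length).filterMap fun i =>
    if (T.drop i).take u.length = u then (T.drop (i + u.length)).head? else none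

/-- `|s|·H₀(s)`: zero-th order empirical entropy cost (bits). -/
noncomputable def nH0 {α : Type*} [DecidableEq α] (s : List α) : ℝ :=
  ∑ c ∈ s.toFinset, (s.count c : ℝ) * Real.logb 2 ((s.length : ℝ) / (s.count c : ℝ))

/-- `|T|·H_k(T) = Σ_{u ∈ Σ^k} |u_T|·H₀(u_T)`: `k`-th order entropy cost. -/
noncomputable def nHk {α : Type*} [Fintype α] [DecidableEq α] (k : ℕ) (T : List α) : ℝ :=
  ∑ u : Fin k → α, nH0 (following T (List.ofFn u))

/-!
An infix of length `k + 1` of a power `w ^ m` with `|w| = k + 1` is a rotation of `w`, hence a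
permutation of `w`; so the `k` symbols of a context determine the symbol that follows it, every
context has a single follower in each half of `T`, and `H_k` of each half vanishes. In `T` the
context `2^k` is followed `m` times by `0` and then `m` times by `1`, so this context alone
contributes `2m = |T| / (k + 1)` bits.
-/

namespace List

variable {α : Type*}

theorem getElem?_flatten_replicate (w : List α) {m p : ℕ} (hp : p < m * w.length) :
    (replicate m w).flatten[p]? = w[p % w.length]? := by
  induction m generalizing p with
  | zero => simp at hp
  | succ m ih =>
    rw [replicate_succ, flatten_cons, getElem?_append]
    split_ifs with hpw
    · rw [Nat.mod_eq_of_lt hpw]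
    · rw [ih (by rw [Nat.succ_mul] at hp; omega), ← Nat.mod_eq_sub_mod (by omega)]

theorem IsInfix.perm_of_flatten_replicate {v w : List α} {m : ℕ}
    (hv : v <:+: (replicate m w).flatten) (hlen : v.length = w.length) : v ~ w := by
  obtain ⟨s, hs, hget⟩ := infix_iff_getElem?.mp hv
  suffices v = w.rotate s from this ▸ rotate_perm w s
  refine ext_getElem (by simp [hlen]) fun i hi _ => ?_
  have hH : (replicate m w).flatten.length = m * w.length := by simp
  rw [getElem_rotate, ← Option.some_inj, ← hget i hi, getElem?_flatten_replicate w (by omega),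
    getElem?_eq_getElem]

theorem append_singleton_prefix_iff {u l : List α} {a : α} :
    u ++ [a] <+: l ↔ u <+: l ∧ (l.drop u.length).head? = some a := by
  constructor
  · rintro ⟨t, rfl⟩
    exact ⟨⟨a :: t, by simp⟩, by simp⟩
  · rintro ⟨⟨t, rfl⟩, h⟩
    obtain ⟨t', rfl⟩ : ∃ t', t = a :: t' := by
      cases t <;> simp_all
    exact ⟨t', by simp⟩

theorem infix_iff_exists_prefix_drop {v l : List α} : v <:+: l ↔ ∃ i, v <+: l.drop i := by
  constructor
  · rintro ⟨s, t, rfl⟩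
    exact ⟨s.length, t, by simp⟩
  · rintro ⟨i, h⟩
    exact h.isInfix.trans (drop_suffix i l).isInfix

theorem take_replicate_append_cons_eq_replicate_iff {b c : α} (hbc : b ≠ c)
    (R : List α) {j k : ℕ} (hjk : j ≤ k) :
    (replicate j c ++ b :: R).take k = replicate k c ↔ j = k := by
  refine ⟨fun h => ?_, by rintro rfl; simp⟩
  by_contra hne
  obtain ⟨n, hn⟩ : ∃ n, k - j = n + 1 := ⟨k - j - 1, by omega⟩
  have hb : b ∈ (replicate j c ++ b :: R).take k := by
    simp [take_append, hn]
  rw [h] at hb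
  exact hbc (eq_of_mem_replicate hb)

end List

section Following

variable {α : Type*} [DecidableEq α]

theorem mem_following_iff {T u : List α} {a : α} :
    a ∈ following T u ↔ u ++ [a] <:+: T := by
  have window (i : ℕ) : (if (T.drop i).take u.length = u then (T.drop (i + u.length)).head?
      else none) = some a ↔ u ++ [a] <+: T.drop i := by
    rw [List.append_singleton_prefix_iff, List.prefix_iff_eq_take, List.drop_drop,
      Nat.add_comm]
    split_ifs with h
    · simp [h]
    · simp [Ne.symm h]
  simp only [following, List.mem_filterMap, List.mem_range, window,
    List.infix_iff_exists_prefix_drop]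
  refine ⟨fun ⟨i, _, h⟩ => ⟨i, h⟩, fun ⟨i, h⟩ => ⟨i, ?_, h⟩⟩
  have := h.length_le
  simp only [List.length_append, List.length_drop, List.length_singleton] at this
  omega

theorem following_cons (x : α) (T u : List α) :
    following (x :: T) u =
      (if (x :: T).take u.length = u then ((x :: T).drop u.length).head? else none).toList ++
        following T u := by
  rw [following, List.length_cons, List.range_succ_eq_map, List.filterMap_cons,
    List.filterMap_map]
  split <;> simp_all [following, Nat.add_right_comm _ 1]

theorem following_replicate_append_cons {b c : α} (hbc : b ≠ c) (R : List α) {j k : ℕ}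
    (hjk : j ≤ k) :
    following (List.replicate j c ++ b :: R) (List.replicate k c) =
      (if j = k then [b] else []) ++ following R (List.replicate k c) := by
  induction j with
  | zero =>
    have window := List.take_replicate_append_cons_eq_replicate_iff hbc R (Nat.zero_le k)
    rw [List.replicate_zero, List.nil_append] at window ⊢
    simp only [following_cons, List.length_replicate, window]
    split_ifs with h
    · subst h; simp
    · simp
  | succ j ih =>
    rw [List.replicate_succ, List.cons_append, following_cons, ih (by omega),
      if_neg (show j ≠ k by omega), List.nil_append, ← List.cons_append, ← List.replicate_succ,
      List.length_replicate]
    simp only [List.take_replicate_append_cons_eq_replicate_iff hbc R hjk]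
    split_ifs with h
    · subst h; simp
    · simp

theorem following_flatten_replicate_append {b c : α} (hbc : b ≠ c) (m k : ℕ) (R : List α) :
    following ((List.replicate m (List.replicate k c ++ [b])).flatten ++ R) (List.replicate k c) =
      List.replicate m b ++ following R (List.replicate k c) := by
  induction m with
  | zero => simp
  | succ m ih =>
    have := following_replicate_append_cons (j := k) hbc
      ((List.replicate m (List.replicate k c ++ [b])).flatten ++ R) le_rfl
    simp_all [List.replicate_succ]

theorem following_flatten_replicate_eq {w u : List α} {m : ℕ} (hu : u.length + 1 = w.length)
    {a a' : α} (ha : a ∈ following (List.replicate m w).flatten u)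
    (ha' : a' ∈ following (List.replicate m w).flatten u) : a = a' := by
  have hperm {x : α} (hx : x ∈ following (List.replicate m w).flatten u) : (u ++ [x]).Perm w :=
    (mem_following_iff.mp hx).perm_of_flatten_replicate (by simpa using hu)
  simpa using (List.perm_append_left_iff u).mp ((hperm ha).trans (hperm ha').symm)

end Following

section Entropy

variable {α : Type*} [DecidableEq α]

theorem nH0_nonneg (s : List α) : 0 ≤ nH0 s := by
  refine Finset.sum_nonneg fun c hc => mul_nonneg (Nat.cast_nonneg _) ?_
  have hpos : (0 : ℝ) < s.count c := by
    exact_mod_cast List.count_pos_iff.mpr (List.mem_toFinset.mp hc)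
  refine Real.logb_nonneg one_lt_two ((one_le_div hpos).mpr ?_)
  exact_mod_cast List.count_le_length

theorem nH0_eq_zero_of_forall_eq {s : List α} (h : ∀ a ∈ s, ∀ b ∈ s, a = b) : nH0 s = 0 := by
  refine Finset.sum_eq_zero fun c hc => ?_
  have hc : c ∈ s := List.mem_toFinset.mp hc
  have hcount : s.count c = s.length := List.count_eq_length.mpr (h c hc)
  have hlen : (s.length : ℝ) ≠ 0 := by exact_mod_cast (List.length_pos_of_mem hc).ne'
  rw [hcount, div_self hlen, Real.logb_one, mul_zero]

theorem nH0_replicate_append_replicate {a b : α} (hab : a ≠ b) (m : ℕ) :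
    nH0 (List.replicate m a ++ List.replicate m b) = 2 * m := by
  rcases Nat.eq_zero_or_pos m with rfl | hm
  · simp [nH0]
  have hsupp : (List.replicate m a ++ List.replicate m b).toFinset = {a, b} := by
    simp [List.toFinset_replicate_of_ne_zero hm.ne']
  have hcount_a : (List.replicate m a ++ List.replicate m b).count a = m := by
    simp [List.count_replicate, hab.symm]
  have hcount_b : (List.replicate m a ++ List.replicate m b).count b = m := by
    simp [List.count_replicate, hab]
  have hratio : ((m + m : ℕ) : ℝ) / m = 2 := by push_cast; field_simp; ring
  rw [nH0, hsupp, Finset.sum_pair hab, hcount_a, hcount_b, List.length_append,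
    List.length_replicate, List.length_replicate, hratio, Real.logb_self_eq_one one_lt_two]
  ring

theorem nH0_following_le_nHk [Fintype α] {k : ℕ} (T : List α) (u : Fin k → α) :
    nH0 (following T (List.ofFn u)) ≤ nHk k T :=
  Finset.single_le_sum (f := fun u : Fin k → α => nH0 (following T (List.ofFn u)))
    (fun _ _ => nH0_nonneg _) (Finset.mem_univ u)

theorem nHk_flatten_replicate [Fintype α] {k : ℕ} {w : List α} (hw : w.length = k + 1) (m : ℕ) :
    nHk k (List.replicate m w).flatten = 0 :=
  Finset.sum_eq_zero fun u _ => nH0_eq_zero_of_forall_eq fun _ ha _ ha' =>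
    following_flatten_replicate_eq (by simpa using hw.symm) ha ha'

end Entropy

theorem ppm_split_example_general (k m : ℕ) :
    let half0 : List (Fin 3) := (List.replicate m (List.replicate k 2 ++ [0])).flatten
    let half1 : List (Fin 3) := (List.replicate m (List.replicate k 2 ++ [1])).flatten
    let T := half0 ++ half1
    (T.length : ℝ) = 2 * m * (k + 1) ∧
    nHk k half0 = 0 ∧ nHk k half1 = 0 ∧
    nHk k T ≥ (T.length : ℝ) / (k + 1) := by
  intro half0 half1 T
  have hlen_half (b : Fin 3) :
      (List.replicate m (List.replicate k 2 ++ [b])).flatten.length = m * (k + 1) := by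
    simp
  have hlen : (T.length : ℝ) = 2 * m * (k + 1) := by
    simp only [T, half0, half1, List.length_append, hlen_half]
    push_cast
    ring
  have hfollow : following T (List.replicate k 2) = List.replicate m 0 ++ List.replicate m 1 := by
    have h1 := following_flatten_replicate_append (by decide : (1 : Fin 3) ≠ 2) m k []
    rw [List.append_nil] at h1
    rw [following_flatten_replicate_append (by decide) m k half1, h1]
    simp [following]
  refine ⟨hlen, nHk_flatten_replicate (by simp) m, nHk_flatten_replicate (by simp) m, ?_⟩
  calc (T.length : ℝ) / (k + 1) = 2 * m := by rw [hlen]; field_simp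
    _ = nH0 (following T (List.replicate k 2)) := by
      rw [hfollow, nH0_replicate_append_replicate (by decide)]
    _ ≤ nHk k T := by simpa using nH0_following_le_nHk T (fun _ : Fin k => (2 : Fin 3))

/-- Consider the PPM-style cost model in which compressing a
string `s` with `k`-th order context coding outputs `|s|·H_k(s) + O(log |s|)` bits.
For `T = (2^k 0)^m (2^k 1)^m` over the alphabet `{0,1,2}` (where `2^k` is `k`
repetitions of symbol `2`, and `n = |T| = 2m(k+1)`): each half of `T` has `k`-th
order entropy cost `0` — so compressing the two halves separately costs `O(log n)`
bits — while the whole string has `n·H_k(T) ≥ n/(k+1)` — so compressing `T` at once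
costs at least `n/(k+1) + O(log n)` bits; hence splitting improves the cost by a
factor `Ω(n/((k+1) log n))`. -/
theorem ppm_split_example (k m : ℕ) (hm : 0 < m) :
    let half0 : List (Fin 3) := (List.replicate m (List.replicate k 2 ++ [0])).flatten
    let half1 : List (Fin 3) := (List.replicate m (List.replicate k 2 ++ [1])).flatten
    let T := half0 ++ half1
    (T.length : ℝ) = 2 * m * (k + 1) ∧
    nHk k half0 = 0 ∧ nHk k half1 = 0 ∧
    nHk k T ≥ (T.length : ℝ) / (k + 1) :=
  ppm_split_example_general k m
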